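/- Let h : Fin k → Matrix (Fin n) (Fin n) ℝ be a family of real matrices. Then ∑_{α,γ,i,m} (∑_j (h_α i j · h_γ m j − h_α m j · h_γ i j))² ≤ 4·(∑_{α,i,j} (h_α i j)²)². -/
import Mathlib


open Finset

/-- Second Schwartz inequality in Lemma 4.3. -/
theorem stmt_2 {n k : ℕ} (h : Fin k → Matrix (Fin n) (Fin n) ℝ) :
    ∑ α : Fin k, ∑ γ : Fin k, ∑ i : Fin n, ∑ m : Fin n,
        (∑ j : Fin n, (h α i j * h γ m j - h α m j * h γ i j)) ^ 2
      ≤ 4 * (∑ α : Fin k, ∑ i : Fin n, ∑ j : Fin n, (h α i j) ^ 2) ^ 2 := by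
  set f : Fin k → Fin n → ℝ := fun α i => ∑ j : Fin n, (h α i j) ^ 2 with hf
  have key : ∀ α γ : Fin k, ∀ i m : Fin n,
      (∑ j : Fin n, (h α i j * h γ m j - h α m j * h γ i j)) ^ 2
        ≤ 2 * (f α i * f γ m) + 2 * (f α m * f γ i) := by
    intro α γ i m
    have h1 := Finset.sum_mul_sq_le_sq_mul_sq univ (fun j => h α i j) (fun j => h γ m j)
    have h2 := Finset.sum_mul_sq_le_sq_mul_sq univ (fun j => h α m j) (fun j => h γ i j)
    rw [Finset.sum_sub_distrib]
    simp only [hf]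
    nlinarith [sq_nonneg ((∑ j : Fin n, h α i j * h γ m j) +
      (∑ j : Fin n, h α m j * h γ i j))]
  calc ∑ α : Fin k, ∑ γ : Fin k, ∑ i : Fin n, ∑ m : Fin n,
        (∑ j : Fin n, (h α i j * h γ m j - h α m j * h γ i j)) ^ 2
      ≤ ∑ α : Fin k, ∑ γ : Fin k, ∑ i : Fin n, ∑ m : Fin n,
        (2 * (f α i * f γ m) + 2 * (f α m * f γ i)) := by
        refine Finset.sum_le_sum fun α _ => Finset.sum_le_sum fun γ _ =>
          Finset.sum_le_sum fun i _ => Finset.sum_le_sum fun m _ => key α γ i m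
    _ = 4 * (∑ α : Fin k, ∑ i : Fin n, f α i) ^ 2 := by
        have e1 : (∑ α : Fin k, ∑ i : Fin n, f α i) ^ 2
            = ∑ α : Fin k, ∑ γ : Fin k, ∑ i : Fin n, ∑ m : Fin n, f α i * f γ m := by
          rw [sq, Finset.sum_mul_sum]
          simp only [Finset.sum_mul, Finset.mul_sum]
          exact Finset.sum_congr rfl fun α _ => Finset.sum_congr rfl fun γ _ =>
            Finset.sum_comm
        have e2 : ∑ α : Fin k, ∑ γ : Fin k, ∑ i : Fin n, ∑ m : Fin n, f α m * f γ i
            = ∑ α : Fin k, ∑ γ : Fin k, ∑ i : Fin n, ∑ m : Fin n, f α i * f γ m :=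
          Finset.sum_congr rfl fun α _ => Finset.sum_congr rfl fun γ _ =>
            Finset.sum_comm
        have e3 : (4:ℝ) * (∑ α : Fin k, ∑ i : Fin n, f α i) ^ 2
            = 2 * (∑ α : Fin k, ∑ γ : Fin k, ∑ i : Fin n, ∑ m : Fin n, f α i * f γ m)
              + 2 * (∑ α : Fin k, ∑ γ : Fin k, ∑ i : Fin n, ∑ m : Fin n, f α m * f γ i) := by
          rw [e2, ← e1]; ring
        rw [e3]
        simp only [Finset.mul_sum, ← Finset.sum_add_distrib]
    _ = 4 * (∑ α : Fin k, ∑ i : Fin n, ∑ j : Fin n, (h α i j) ^ 2) ^ 2 := rfl
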